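/- arXiv:1608.07914 — 2 statements merged into one kernel-verified Lean document; each statement's English description precedes it below -/
import Mathlib

section
/- Carleman estimate for a 2×2 first-order system in x with an integral term (Proposition in Section 5). Let λ > 0 and δ > 0 be fixed and set ψ(x) = (e^{λd(x)} − e^{2λ‖d‖})/δ². Let A : Ω×V → ℝ^{2×2} and D : Ω×V×V → ℝ^{2×2} be measurable with all entries bounded. Then there exist s₁ > 0 and C > 0 such that for all s ≥ s₁ the following holds: for every w : [0,ℓ]×V → ℝ², measurable in v, differentiable in x with w and ∂ₓw square-integrable on Ω×V, satisfying w(0,v) = (0,0) for all v ∈ V and ∂ₓw(x,v) + A(x,v)w(x,v) + ∫_V D(x,v,v')w(x,v')dv' = F(x,v) on Ω×V with F square-integrable, one has ∫_Ω∫_V ( |∂ₓw(x,v)|² + s²|w(x,v)|² ) e^{2sψ(x)} dv dx ≤ C ∫_Ω∫_V |F(x,v)|² e^{2sψ(x)} dv dx, where |·| denotes the Euclidean norm on ℝ². -/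
/-!
For each fixed velocity `v`, the function `x ↦ |w(x,v)|² e^{2sψ(x)}` vanishes at `x = 0` and is
nonnegative at `x = ℓ`; since `ψ' ≤ -c < 0` on `[0,ℓ]`, integrating its derivative and bounding
`2 w·∂ₓw` by Young's inequality gives `s²c² ∫ |w|² e^{2sψ} ≤ ∫ |∂ₓw|² e^{2sψ}`. On the other hand
the system expresses `∂ₓw` through `F`, the bounded matrix `A` and the integral operator with
bounded kernel `D`, so by Cauchy–Schwarz `∫ |∂ₓw|² e^{2sψ} ≤ 3 ∫ |F|² e^{2sψ} + K ∫ |w|² e^{2sψ}`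
with `K` independent of `s`. For `s²c² ≥ 2K` the last term is absorbed.
-/

open MeasureTheory

/-- The velocity set `V = {v : v₀ ≤ |v| ≤ v₁}`. -/
def Vset (v₀ v₁ : ℝ) : Set ℝ := Set.Icc (-v₁) (-v₀) ∪ Set.Icc v₀ v₁

open Set

theorem sq_integral_le_measureReal_mul_integral_sq {α : Type*} [MeasurableSpace α]
    {μ : Measure α} [IsFiniteMeasure μ] {f : α → ℝ} (hf : MemLp f 2 μ) :
    (∫ x, f x ∂μ) ^ 2 ≤ μ.real univ * ∫ x, f x ^ 2 ∂μ := by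
  rcases eq_zero_or_neZero μ with rfl | _
  · simp
  have hjensen : (⨍ x, f x ∂μ) ^ 2 ≤ ⨍ x, f x ^ 2 ∂μ :=
    (even_two.convexOn_pow (𝕜 := ℝ)).map_average_le (continuous_pow 2).continuousOn
      isClosed_univ (by simp) (hf.integrable one_le_two) hf.integrable_sq
  have hm : 0 < μ.real univ := measureReal_univ_pos
  rw [average_eq, average_eq, smul_eq_mul, smul_eq_mul, mul_pow, inv_pow, ← div_eq_inv_mul,
    ← div_eq_inv_mul, div_le_div_iff₀ (by positivity) hm] at hjensen
  exact le_of_mul_le_mul_right (by linarith) hm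

theorem sum_mulVec_sq_le {ι : Type*} [Fintype ι] (A : Matrix ι ι ℝ) {M : ℝ}
    (hA : ∀ i j, |A i j| ≤ M) (u : ι → ℝ) :
    ∑ i, A.mulVec u i ^ 2 ≤ Fintype.card ι ^ 2 * M ^ 2 * ∑ j, u j ^ 2 := by
  have hrow : ∀ i, A.mulVec u i ^ 2 ≤ Fintype.card ι * M ^ 2 * ∑ j, u j ^ 2 := fun i =>
    calc A.mulVec u i ^ 2 ≤ (∑ j, A i j ^ 2) * ∑ j, u j ^ 2 :=
          Finset.sum_mul_sq_le_sq_mul_sq _ _ _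
      _ ≤ (∑ _j : ι, M ^ 2) * ∑ j, u j ^ 2 := by
          refine mul_le_mul_of_nonneg_right (Finset.sum_le_sum fun j _ => ?_)
            (Finset.sum_nonneg fun j _ => sq_nonneg _)
          exact sq_le_sq' (abs_le.mp (hA i j)).1 (abs_le.mp (hA i j)).2
      _ = Fintype.card ι * M ^ 2 * ∑ j, u j ^ 2 := by simp
  calc ∑ i, A.mulVec u i ^ 2 ≤ ∑ _i : ι, Fintype.card ι * M ^ 2 * ∑ j, u j ^ 2 :=
        Finset.sum_le_sum fun i _ => hrow i
    _ = Fintype.card ι ^ 2 * M ^ 2 * ∑ j, u j ^ 2 := by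
        rw [Finset.sum_const, Finset.card_univ, nsmul_eq_mul]; ring

theorem sum_integral_mulVec_sq_le {ι β : Type*} [Fintype ι] [MeasurableSpace β]
    {ν : Measure β} [IsFiniteMeasure ν] (D : β → Matrix ι ι ℝ) {M : ℝ}
    (hD : ∀ᵐ y ∂ν, ∀ i j, |D y i j| ≤ M) {u : β → ι → ℝ}
    (hu : ∀ j, AEStronglyMeasurable (fun y => u y j) ν)
    (hu2 : Integrable (fun y => ∑ j, u y j ^ 2) ν) :
    ∑ i, (∫ y, (D y).mulVec (u y) i ∂ν) ^ 2
      ≤ Fintype.card ι ^ 2 * M ^ 2 * (ν.real univ * ∫ y, ∑ j, u y j ^ 2 ∂ν) := by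
  set n : ℝ := (Fintype.card ι : ℝ)
  set m : β → ℝ := fun y => ∑ j, |u y j|
  have hm_sq : ∀ y, m y ^ 2 ≤ n * ∑ j, u y j ^ 2 := fun y => by
    simpa only [sq_abs, Finset.card_univ] using sq_sum_le_card_mul_sum_sq (s := Finset.univ)
      (f := fun j => |u y j|)
  have hm_meas : AEStronglyMeasurable m ν :=
    Finset.aestronglyMeasurable_fun_sum _ fun j _ => (hu j).norm
  have hm : MemLp m 2 ν := by
    refine (memLp_two_iff_integrable_sq hm_meas).2 ((hu2.const_mul n).mono' (hm_meas.pow 2) ?_)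
    filter_upwards with y
    rw [Real.norm_eq_abs, abs_of_nonneg (sq_nonneg _)]
    exact hm_sq y
  have hentry : ∀ i, |∫ y, (D y).mulVec (u y) i ∂ν| ≤ M * ∫ y, m y ∂ν := fun i => by
    rw [← integral_const_mul, ← Real.norm_eq_abs]
    refine (norm_integral_le_integral_norm _).trans (integral_mono_of_nonneg
      (.of_forall fun y => norm_nonneg _) ((hm.integrable one_le_two).const_mul M) ?_)
    filter_upwards [hD] with y hy
    calc ‖∑ j, D y i j * u y j‖ ≤ ∑ j, |D y i j| * |u y j| := by
          rw [Real.norm_eq_abs]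
          exact (Finset.abs_sum_le_sum_abs _ _).trans_eq (by simp only [abs_mul])
      _ ≤ ∑ j, M * |u y j| := by gcongr with j; exact hy i j
      _ = M * m y := by rw [Finset.mul_sum]
  have hrow : ∀ i, (∫ y, (D y).mulVec (u y) i ∂ν) ^ 2
      ≤ n * M ^ 2 * (ν.real univ * ∫ y, ∑ j, u y j ^ 2 ∂ν) := fun i =>
    calc (∫ y, (D y).mulVec (u y) i ∂ν) ^ 2 ≤ (M * ∫ y, m y ∂ν) ^ 2 :=
          sq_le_sq' (abs_le.mp (hentry i)).1 (abs_le.mp (hentry i)).2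
      _ = M ^ 2 * (∫ y, m y ∂ν) ^ 2 := by ring
      _ ≤ M ^ 2 * (ν.real univ * ∫ y, m y ^ 2 ∂ν) := by
          gcongr; exact sq_integral_le_measureReal_mul_integral_sq hm
      _ ≤ M ^ 2 * (ν.real univ * ∫ y, n * ∑ j, u y j ^ 2 ∂ν) := by
          refine mul_le_mul_of_nonneg_left (mul_le_mul_of_nonneg_left ?_ measureReal_nonneg)
            (sq_nonneg M)
          exact integral_mono_of_nonneg (.of_forall fun y => sq_nonneg _) (hu2.const_mul n)
            (.of_forall hm_sq)
      _ = n * M ^ 2 * (ν.real univ * ∫ y, ∑ j, u y j ^ 2 ∂ν) := by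
          rw [integral_const_mul]; ring
  calc ∑ i, (∫ y, (D y).mulVec (u y) i ∂ν) ^ 2
      ≤ ∑ _i : ι, n * M ^ 2 * (ν.real univ * ∫ y, ∑ j, u y j ^ 2 ∂ν) :=
        Finset.sum_le_sum fun i _ => hrow i
    _ = n ^ 2 * M ^ 2 * (ν.real univ * ∫ y, ∑ j, u y j ^ 2 ∂ν) := by
        rw [Finset.sum_const, Finset.card_univ, nsmul_eq_mul]; ring

theorem sum_sq_sub_sub_le {ι : Type*} [Fintype ι] (a b c : ι → ℝ) :
    ∑ i, (a i - b i - c i) ^ 2 ≤ 3 * (∑ i, a i ^ 2 + ∑ i, b i ^ 2 + ∑ i, c i ^ 2) := by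
  simp only [Finset.mul_sum, ← Finset.sum_add_distrib]
  gcongr with i
  nlinarith [sq_nonneg (a i + b i), sq_nonneg (a i + c i), sq_nonneg (b i - c i)]

theorem sum_sq_le_of_add_mulVec_add_integral_eq {ι Y : Type*} [Fintype ι] [MeasurableSpace Y]
    {ν : Measure Y} [IsFiniteMeasure ν] {A : Matrix ι ι ℝ} {D : Y → Matrix ι ι ℝ} {MA MD : ℝ}
    (hA : ∀ i j, |A i j| ≤ MA) (hD : ∀ᵐ y ∂ν, ∀ i j, |D y i j| ≤ MD) {w : Y → ι → ℝ}
    (hw : ∀ j, AEStronglyMeasurable (fun y => w y j) ν)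
    (hw2 : Integrable (fun y => ∑ j, w y j ^ 2) ν) {u' u F : ι → ℝ}
    (h : ∀ i, u' i + A.mulVec u i + ∫ y, (D y).mulVec (w y) i ∂ν = F i) :
    ∑ i, u' i ^ 2 ≤ 3 * ∑ i, F i ^ 2 + 3 * Fintype.card ι ^ 2 * MA ^ 2 * ∑ i, u i ^ 2
      + 3 * Fintype.card ι ^ 2 * MD ^ 2 * ν.real univ * ∫ y, ∑ j, w y j ^ 2 ∂ν := by
  have hu' : u' = fun i => F i - A.mulVec u i - ∫ y, (D y).mulVec (w y) i ∂ν := by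
    funext i; linarith [h i]
  have hAu := sum_mulVec_sq_le A hA u
  have hDw := sum_integral_mulVec_sq_le D hD hw hw2
  rw [hu']
  refine (sum_sq_sub_sub_le _ _ _).trans ?_
  nlinarith

theorem exists_deriv_le_neg_of_contDiffOn_Icc {f : ℝ → ℝ} {a b : ℝ} (hab : a < b)
    (hf : ContDiffOn ℝ 1 f (Icc a b)) (hf' : ∀ x ∈ Icc a b, deriv f x < 0) :
    ∃ c > 0, ∀ x ∈ Icc a b, deriv f x ≤ -c := by
  have hcont : ContinuousOn (deriv f) (Icc a b) :=
    (hf.continuousOn_derivWithin (uniqueDiffOn_Icc hab) le_rfl).congr fun x hx =>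
      ((differentiableAt_of_deriv_ne_zero (hf' x hx).ne).derivWithin
        (uniqueDiffOn_Icc hab x hx)).symm
  obtain ⟨x₀, hx₀, hmax⟩ := isCompact_Icc.exists_isMaxOn (nonempty_Icc.2 hab.le) hcont
  exact ⟨-deriv f x₀, neg_pos.2 (hf' x₀ hx₀), fun x hx => by simpa using hmax hx⟩

theorem carleman_estimate_Ioo {ι : Type*} [Fintype ι] {ℓ s c : ℝ} {ψ : ℝ → ℝ}
    {u : ℝ → ι → ℝ} (hℓ : 0 ≤ ℓ) (hs : 0 ≤ s) (hc : 0 ≤ c)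
    (hψ : ∀ x ∈ Icc 0 ℓ, DifferentiableAt ℝ ψ x ∧ deriv ψ x ≤ -c)
    (hu : ∀ i, ∀ x ∈ Icc 0 ℓ, DifferentiableAt ℝ (fun x => u x i) x) (hu0 : ∀ i, u 0 i = 0)
    (hW : IntegrableOn (fun x => (∑ i, u x i ^ 2) * Real.exp (2 * s * ψ x)) (Ioo 0 ℓ))
    (hG : IntegrableOn
      (fun x => (∑ i, deriv (fun x => u x i) x ^ 2) * Real.exp (2 * s * ψ x)) (Ioo 0 ℓ)) :
    s ^ 2 * c ^ 2 * ∫ x in Ioo 0 ℓ, (∑ i, u x i ^ 2) * Real.exp (2 * s * ψ x)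
      ≤ ∫ x in Ioo 0 ℓ, (∑ i, deriv (fun x => u x i) x ^ 2) * Real.exp (2 * s * ψ x) := by
  set φ := fun x => Real.exp (2 * s * ψ x)
  set W := fun x => ∑ i, u x i ^ 2
  set G := fun x => ∑ i, deriv (fun x => u x i) x ^ 2
  -- `g` vanishes at `0`, is nonnegative at `ℓ`, and its derivative is at most `(G - s²c²W) φ`
  set g := fun x => s * c * (W x * φ x)
  set g' := fun x => s * c * ((∑ i, 2 * u x i * deriv (fun x => u x i) x) * φ x
    + W x * (φ x * (2 * s * deriv ψ x)))
  have hg : ∀ x ∈ Icc 0 ℓ, HasDerivAt g (g' x) x := fun x hx => by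
    have hW' : HasDerivAt W (∑ i, 2 * u x i * deriv (fun x => u x i) x) x := by
      refine HasDerivAt.fun_sum fun i _ => ?_
      simpa [mul_comm] using (hu i x hx).hasDerivAt.fun_pow 2
    exact ((hW'.mul ((hψ x hx).1.hasDerivAt.const_mul (2 * s)).exp).const_mul (s * c))
  have hg'_le : ∀ x ∈ Icc 0 ℓ, g' x ≤ G x * φ x - s ^ 2 * c ^ 2 * (W x * φ x) := fun x hx => by
    have hamgm : s * c * ∑ i, 2 * u x i * deriv (fun x => u x i) x ≤ s ^ 2 * c ^ 2 * W x + G x := by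
      simp only [W, G, Finset.mul_sum, ← Finset.sum_add_distrib]
      gcongr with i
      nlinarith [two_mul_le_add_sq (s * c * u x i) (deriv (fun x => u x i) x)]
    have hψW : c * deriv ψ x * W x ≤ -c ^ 2 * W x := by
      have : c * deriv ψ x ≤ -c ^ 2 := by nlinarith [(hψ x hx).2]
      exact mul_le_mul_of_nonneg_right this (Finset.sum_nonneg fun i _ => sq_nonneg _)
    have hφ : 0 ≤ φ x := (Real.exp_pos _).le
    have key : s * c * ∑ i, 2 * u x i * deriv (fun x => u x i) x
        + 2 * s ^ 2 * (c * deriv ψ x * W x) ≤ G x - s ^ 2 * c ^ 2 * W x := by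
      nlinarith [mul_le_mul_of_nonneg_left hψW (sq_nonneg s)]
    calc g' x = (s * c * ∑ i, 2 * u x i * deriv (fun x => u x i) x
          + 2 * s ^ 2 * (c * deriv ψ x * W x)) * φ x := by simp only [g']; ring
      _ ≤ (G x - s ^ 2 * c ^ 2 * W x) * φ x := mul_le_mul_of_nonneg_right key hφ
      _ = G x * φ x - s ^ 2 * c ^ 2 * (W x * φ x) := by ring
  have hint : IntegrableOn (fun x => G x * φ x - s ^ 2 * c ^ 2 * (W x * φ x)) (Icc 0 ℓ) := by
    rw [integrableOn_Icc_iff_integrableOn_Ioo]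
    exact hG.sub (hW.const_mul _)
  have hftc := intervalIntegral.sub_le_integral_of_hasDeriv_right_of_le hℓ
    (fun x hx => (hg x hx).continuousAt.continuousWithinAt)
    (fun x hx => (hg x (Ioo_subset_Icc_self hx)).hasDerivWithinAt) hint
    (fun x hx => hg'_le x (Ioo_subset_Icc_self hx))
  rw [intervalIntegral.integral_of_le hℓ, integral_Ioc_eq_integral_Ioo] at hftc
  have hg0 : g 0 = 0 := by simp [g, W, hu0]
  have hgℓ : 0 ≤ g ℓ := by positivity
  have hsplit : ∫ x in Ioo 0 ℓ, G x * φ x - s ^ 2 * c ^ 2 * (W x * φ x)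
      = (∫ x in Ioo 0 ℓ, G x * φ x) - s ^ 2 * c ^ 2 * ∫ x in Ioo 0 ℓ, W x * φ x :=
    (integral_sub hG (hW.const_mul _)).trans (by rw [integral_const_mul])
  linarith

theorem carleman_estimate_prod {ι Y : Type*} [Fintype ι] [MeasurableSpace Y] {ν : Measure Y}
    [SFinite ν] {ℓ s c : ℝ} {ψ : ℝ → ℝ} {w : ℝ → Y → ι → ℝ} (hℓ : 0 ≤ ℓ) (hs : 0 ≤ s)
    (hc : 0 ≤ c) (hψ : ∀ x ∈ Icc 0 ℓ, DifferentiableAt ℝ ψ x ∧ deriv ψ x ≤ -c)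
    (hw : ∀ᵐ y ∂ν, ∀ i, ∀ x ∈ Icc 0 ℓ, DifferentiableAt ℝ (fun x => w x y i) x)
    (hw0 : ∀ᵐ y ∂ν, ∀ i, w 0 y i = 0)
    (hW : Integrable (fun q : ℝ × Y => (∑ i, w q.1 q.2 i ^ 2) * Real.exp (2 * s * ψ q.1))
      ((volume.restrict (Ioo 0 ℓ)).prod ν))
    (hG : Integrable
      (fun q : ℝ × Y => (∑ i, deriv (fun x => w x q.2 i) q.1 ^ 2) * Real.exp (2 * s * ψ q.1))
      ((volume.restrict (Ioo 0 ℓ)).prod ν)) :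
    s ^ 2 * c ^ 2 * ∫ q, (∑ i, w q.1 q.2 i ^ 2) * Real.exp (2 * s * ψ q.1)
        ∂(volume.restrict (Ioo 0 ℓ)).prod ν
      ≤ ∫ q, (∑ i, deriv (fun x => w x q.2 i) q.1 ^ 2) * Real.exp (2 * s * ψ q.1)
        ∂(volume.restrict (Ioo 0 ℓ)).prod ν := by
  rw [integral_prod_symm _ hW, integral_prod_symm _ hG, ← integral_const_mul]
  refine integral_mono_ae (hW.integral_prod_right.const_mul _) hG.integral_prod_right ?_
  filter_upwards [hw, hw0, hW.prod_left_ae, hG.prod_left_ae] with y hwy hw0y hWy hGy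
  exact carleman_estimate_Ioo hℓ hs hc hψ hwy hw0y hWy hGy

theorem integral_mul_fst_le_of_le_add_integral {X Y : Type*} [MeasurableSpace X]
    [MeasurableSpace Y] {ρ : Measure X} {ν : Measure Y} [SFinite ρ] [IsFiniteMeasure ν]
    {G F W : X × Y → ℝ} {φ : X → ℝ} {a b k : ℝ} (hφ : ∀ x, 0 ≤ φ x)
    (hG : Integrable (fun q => G q * φ q.1) (ρ.prod ν))
    (hF : Integrable (fun q => F q * φ q.1) (ρ.prod ν))
    (hW : Integrable (fun q => W q * φ q.1) (ρ.prod ν))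
    (hle : ∀ᵐ q ∂ρ.prod ν, G q ≤ a * F q + b * W q + k * ∫ y, W (q.1, y) ∂ν) :
    ∫ q, G q * φ q.1 ∂ρ.prod ν
      ≤ a * ∫ q, F q * φ q.1 ∂ρ.prod ν + (b + k * ν.real univ) * ∫ q, W q * φ q.1 ∂ρ.prod ν := by
  have hWx : Integrable (fun x => ∫ y, W (x, y) * φ x ∂ν) ρ := hW.integral_prod_left
  have hnonlocal : ∫ q, k * ∫ y, W (q.1, y) * φ q.1 ∂ν ∂ρ.prod ν
      = k * ν.real univ * ∫ q, W q * φ q.1 ∂ρ.prod ν := by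
    rw [integral_const_mul, integral_fun_fst (fun x => ∫ y, W (x, y) * φ x ∂ν), integral_prod _ hW,
      smul_eq_mul]
    ring
  calc ∫ q, G q * φ q.1 ∂ρ.prod ν
      ≤ ∫ q, (a * (F q * φ q.1) + b * (W q * φ q.1) + k * ∫ y, W (q.1, y) * φ q.1 ∂ν)
          ∂ρ.prod ν := by
        refine integral_mono_ae hG
          (((hF.const_mul a).fun_add (hW.const_mul b)).fun_add ((hWx.comp_fst ν).const_mul k)) ?_
        filter_upwards [hle] with q hq
        rw [integral_mul_const]
        have := mul_le_mul_of_nonneg_right hq (hφ q.1)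
        linarith
    _ = _ := by
        rw [integral_add ((hF.const_mul a).fun_add (hW.const_mul b)) ((hWx.comp_fst ν).const_mul k),
          integral_add (hF.const_mul a) (hW.const_mul b), integral_const_mul, integral_const_mul,
          hnonlocal]
        ring

theorem integral_add_sq_mul_le_of_absorb {X : Type*} [MeasurableSpace X] {μ : Measure X}
    {G W F φ : X → ℝ} {s c K : ℝ} (hc : 0 < c) (hs : 2 * K ≤ s ^ 2 * c ^ 2)
    (hWφ0 : ∀ x, 0 ≤ W x * φ x) (hG : Integrable (fun x => G x * φ x) μ)
    (hW : Integrable (fun x => W x * φ x) μ)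
    (hlow : s ^ 2 * c ^ 2 * ∫ x, W x * φ x ∂μ ≤ ∫ x, G x * φ x ∂μ)
    (hup : ∫ x, G x * φ x ∂μ ≤ 3 * ∫ x, F x * φ x ∂μ + K * ∫ x, W x * φ x ∂μ) :
    ∫ x, (G x + s ^ 2 * W x) * φ x ∂μ ≤ (6 + 6 / c ^ 2) * ∫ x, F x * φ x ∂μ := by
  have hsplit : ∫ x, (G x + s ^ 2 * W x) * φ x ∂μ
      = ∫ x, G x * φ x ∂μ + s ^ 2 * ∫ x, W x * φ x ∂μ := by
    simp_rw [add_mul, mul_assoc]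
    rw [integral_add hG (hW.const_mul _), integral_const_mul]
  have hW0 : 0 ≤ ∫ x, W x * φ x ∂μ := integral_nonneg hWφ0
  have hK : 2 * (K * ∫ x, W x * φ x ∂μ) ≤ s ^ 2 * c ^ 2 * ∫ x, W x * φ x ∂μ := by nlinarith
  have hsW : s ^ 2 * (∫ x, W x * φ x ∂μ) ≤ 6 / c ^ 2 * ∫ x, F x * φ x ∂μ := by
    rw [div_mul_eq_mul_div, le_div_iff₀ (by positivity)]
    linarith
  linarith

theorem volume_restrict_prod (s t : Set ℝ) :
    (volume : Measure (ℝ × ℝ)).restrict (s ×ˢ t)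
      = (volume.restrict s).prod (volume.restrict t) := by
  rw [Measure.volume_eq_prod, Measure.prod_restrict]

theorem integrable_mul_fst_of_continuousOn {a b : ℝ} {t : Set ℝ} {f : ℝ × ℝ → ℝ}
    {φ : ℝ → ℝ} (ht : MeasurableSet t) (hφ : ContinuousOn φ (Icc a b))
    (hf : IntegrableOn f (Ioo a b ×ˢ t)) :
    Integrable (fun q => f q * φ q.1) ((volume.restrict (Ioo a b)).prod (volume.restrict t)) := by
  rw [← volume_restrict_prod]
  obtain ⟨C, hC⟩ := isCompact_Icc.exists_bound_of_continuousOn hφ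
  have hφ' : ContinuousOn (fun q : ℝ × ℝ => φ q.1) (Ioo a b ×ˢ t) :=
    (hφ.mono Ioo_subset_Icc_self).comp continuousOn_fst fun q hq => hq.1
  refine hf.mul_bdd (c := C) (hφ'.aestronglyMeasurable (measurableSet_Ioo.prod ht)) ?_
  filter_upwards [ae_restrict_mem (measurableSet_Ioo.prod ht)] with q hq
  exact hC q.1 (Ioo_subset_Icc_self hq.1)

noncomputable def carlemanWeight (lam δ Md : ℝ) (d : ℝ → ℝ) (x : ℝ) : ℝ :=
  (Real.exp (lam * d x) - Real.exp (2 * lam * Md)) / δ ^ 2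

theorem hasDerivAt_carlemanWeight {lam δ Md d' x : ℝ} {d : ℝ → ℝ} (hd : HasDerivAt d d' x) :
    HasDerivAt (carlemanWeight lam δ Md d) (Real.exp (lam * d x) * (lam * d') / δ ^ 2) x :=
  (((hd.const_mul lam).exp).sub_const _).div_const _

theorem exists_deriv_carlemanWeight_le {lam δ Md a b : ℝ} {d : ℝ → ℝ} (hab : a < b)
    (hd : ContDiffOn ℝ 1 d (Icc a b)) (hd' : ∀ x ∈ Icc a b, deriv d x < 0) (hlam : 0 < lam)
    (hδ : δ ≠ 0) :
    ∃ c > 0, ∀ x ∈ Icc a b, DifferentiableAt ℝ (carlemanWeight lam δ Md d) x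
      ∧ deriv (carlemanWeight lam δ Md d) x ≤ -c := by
  have hψ' : ∀ x ∈ Icc a b, deriv (carlemanWeight lam δ Md d) x < 0 := fun x hx => by
    have hdx := (differentiableAt_of_deriv_ne_zero (hd' x hx).ne).hasDerivAt
    rw [(hasDerivAt_carlemanWeight hdx).deriv]
    exact div_neg_of_neg_of_pos (mul_neg_of_pos_of_neg (Real.exp_pos _)
      (mul_neg_of_pos_of_neg hlam (hd' x hx))) (by positivity)
  have hψ : ContDiffOn ℝ 1 (carlemanWeight lam δ Md d) (Icc a b) :=
    ((contDiffOn_const.mul hd).exp.sub contDiffOn_const).div_const _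
  obtain ⟨c, hc, hle⟩ := exists_deriv_le_neg_of_contDiffOn_Icc hab hψ hψ'
  exact ⟨c, hc, fun x hx => ⟨differentiableAt_of_deriv_ne_zero (hψ' x hx).ne, hle x hx⟩⟩

section System

variable {ι : Type*} [Fintype ι] {ℓ MA MD : ℝ} {V : Set ℝ}
  [IsFiniteMeasure (volume.restrict V)] {A : ℝ → ℝ → Matrix ι ι ℝ}
  {D : ℝ → ℝ → ℝ → Matrix ι ι ℝ} {w F : ℝ → ℝ → ι → ℝ}

theorem ae_sum_sq_deriv_le_of_system (hV : MeasurableSet V)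
    (hA : ∀ x ∈ Ioo 0 ℓ, ∀ v ∈ V, ∀ i j, |A x v i j| ≤ MA)
    (hD : ∀ x ∈ Ioo 0 ℓ, ∀ v ∈ V, ∀ v' ∈ V, ∀ i j, |D x v v' i j| ≤ MD)
    (hwm : ∀ i, Measurable fun q : ℝ × ℝ => w q.1 q.2 i)
    (hW : IntegrableOn (fun q : ℝ × ℝ => ∑ i, w q.1 q.2 i ^ 2) (Ioo 0 ℓ ×ˢ V))
    (hode : ∀ x ∈ Ioo 0 ℓ, ∀ v ∈ V, ∀ i, deriv (fun y => w y v i) x + (A x v).mulVec (w x v) i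
      + (∫ v' in V, (D x v v').mulVec (w x v') i) = F x v i) :
    ∀ᵐ q ∂(volume.restrict (Ioo 0 ℓ)).prod (volume.restrict V),
      ∑ i, deriv (fun y => w y q.2 i) q.1 ^ 2 ≤ 3 * ∑ i, F q.1 q.2 i ^ 2
        + 3 * Fintype.card ι ^ 2 * MA ^ 2 * ∑ i, w q.1 q.2 i ^ 2
        + 3 * Fintype.card ι ^ 2 * MD ^ 2 * (volume.restrict V).real univ
          * ∫ y in V, ∑ j, w q.1 y j ^ 2 := by
  rw [IntegrableOn, volume_restrict_prod] at hW
  filter_upwards [Measure.quasiMeasurePreserving_fst.ae hW.prod_right_ae,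
    volume_restrict_prod (Ioo 0 ℓ) V ▸ ae_restrict_mem (measurableSet_Ioo.prod hV)]
    with ⟨x, v⟩ hfib ⟨hx, hv⟩
  exact sum_sq_le_of_add_mulVec_add_integral_eq (hA x hx v hv)
    (ae_restrict_of_forall_mem hV fun v' hv' => hD x hx v hv v' hv')
    (fun j => ((hwm j).comp measurable_prodMk_left).aestronglyMeasurable) hfib (hode x hx v hv)

theorem carleman_estimate_system (hℓ : 0 ≤ ℓ) (hV : MeasurableSet V) {ψ : ℝ → ℝ} {c s : ℝ}
    (hc : 0 < c) (hψ : ∀ x ∈ Icc 0 ℓ, DifferentiableAt ℝ ψ x ∧ deriv ψ x ≤ -c)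
    (hA : ∀ x ∈ Ioo 0 ℓ, ∀ v ∈ V, ∀ i j, |A x v i j| ≤ MA)
    (hD : ∀ x ∈ Ioo 0 ℓ, ∀ v ∈ V, ∀ v' ∈ V, ∀ i j, |D x v v' i j| ≤ MD) (hs₀ : 0 ≤ s)
    (hs : 2 * (3 * Fintype.card ι ^ 2 * MA ^ 2 + 3 * Fintype.card ι ^ 2 * MD ^ 2
      * (volume.restrict V).real univ * (volume.restrict V).real univ) ≤ s ^ 2 * c ^ 2)
    (hwm : ∀ i, Measurable fun q : ℝ × ℝ => w q.1 q.2 i)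
    (hwd : ∀ i, ∀ v ∈ V, ∀ x ∈ Icc 0 ℓ, DifferentiableAt ℝ (fun y => w y v i) x)
    (hW : IntegrableOn (fun q : ℝ × ℝ => ∑ i, w q.1 q.2 i ^ 2) (Ioo 0 ℓ ×ˢ V))
    (hG : IntegrableOn (fun q : ℝ × ℝ => ∑ i, deriv (fun y => w y q.2 i) q.1 ^ 2) (Ioo 0 ℓ ×ˢ V))
    (hF : IntegrableOn (fun q : ℝ × ℝ => ∑ i, F q.1 q.2 i ^ 2) (Ioo 0 ℓ ×ˢ V))
    (hw0 : ∀ v ∈ V, ∀ i, w 0 v i = 0)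
    (hode : ∀ x ∈ Ioo 0 ℓ, ∀ v ∈ V, ∀ i, deriv (fun y => w y v i) x + (A x v).mulVec (w x v) i
      + (∫ v' in V, (D x v v').mulVec (w x v') i) = F x v i) :
    ∫ x in Ioo 0 ℓ, ∫ v in V,
        ((∑ i, deriv (fun y => w y v i) x ^ 2) + s ^ 2 * ∑ i, w x v i ^ 2) * Real.exp (2 * s * ψ x)
      ≤ (6 + 6 / c ^ 2)
        * ∫ x in Ioo 0 ℓ, ∫ v in V, (∑ i, F x v i ^ 2) * Real.exp (2 * s * ψ x) := by
  set φ := fun x => Real.exp (2 * s * ψ x)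
  have hweight : ∀ f : ℝ × ℝ → ℝ, IntegrableOn f (Ioo 0 ℓ ×ˢ V) →
      Integrable (fun q => f q * φ q.1) ((volume.restrict (Ioo 0 ℓ)).prod (volume.restrict V)) :=
    fun f => integrable_mul_fst_of_continuousOn hV (Real.continuous_exp.comp_continuousOn
      (continuousOn_const.mul fun x hx => (hψ x hx).1.continuousAt.continuousWithinAt))
  have hWφ := hweight _ hW
  have hGφ := hweight _ hG
  have hFφ := hweight _ hF
  refine ((integral_prod _ (hweight _ (hG.fun_add (hW.const_mul (s ^ 2))))).symm.trans_le
    ?_).trans_eq (congrArg _ (integral_prod _ hFφ))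
  exact integral_add_sq_mul_le_of_absorb hc hs (fun q => by positivity) hGφ hWφ
    (carleman_estimate_prod hℓ hs₀ hc.le hψ (ae_restrict_of_forall_mem hV fun v hv i => hwd i v hv)
      (ae_restrict_of_forall_mem hV hw0) hWφ hGφ)
    (integral_mul_fst_le_of_le_add_integral (φ := φ) (fun x => (Real.exp_pos _).le) hGφ hFφ hWφ
      (ae_sum_sq_deriv_le_of_system hV hA hD hwm hW hode))

end System

theorem measurableSet_Vset (v₀ v₁ : ℝ) : MeasurableSet (Vset v₀ v₁) :=
  measurableSet_Icc.union measurableSet_Icc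

instance isFiniteMeasure_restrict_Vset (v₀ v₁ : ℝ) :
    IsFiniteMeasure (volume.restrict (Vset v₀ v₁)) :=
  isFiniteMeasure_restrict.2 (measure_union_lt_top measure_Icc_lt_top measure_Icc_lt_top).ne

theorem system_carleman_first_order_general
    (ℓ v₀ v₁ : ℝ) (hℓ : 0 < ℓ)
    (d : ℝ → ℝ)
    (hd : ContDiffOn ℝ 2 d (Set.Icc 0 ℓ))
    (hd' : ∀ x ∈ Set.Icc 0 ℓ, deriv d x < 0)
    (Md : ℝ)
    (lam δ : ℝ) (hlam : 0 < lam) (hδ : 0 < δ)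
    (A : ℝ → ℝ → Matrix (Fin 2) (Fin 2) ℝ)
    (D : ℝ → ℝ → ℝ → Matrix (Fin 2) (Fin 2) ℝ)
    (hA_bdd : ∃ MA : ℝ, ∀ x ∈ Set.Ioo 0 ℓ, ∀ v ∈ Vset v₀ v₁, ∀ i j : Fin 2,
      |A x v i j| ≤ MA)
    (hD_bdd : ∃ MD : ℝ, ∀ x ∈ Set.Ioo 0 ℓ, ∀ v ∈ Vset v₀ v₁, ∀ v' ∈ Vset v₀ v₁,
      ∀ i j : Fin 2, |D x v v' i j| ≤ MD) :
    ∃ s₁ > (0:ℝ), ∃ C > (0:ℝ), ∀ s ≥ s₁, ∀ w F : ℝ → ℝ → Fin 2 → ℝ,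
      (∀ i : Fin 2, Measurable (fun q : ℝ × ℝ => w q.1 q.2 i)) →
      (∀ i : Fin 2, ∀ v ∈ Vset v₀ v₁, ∀ x ∈ Set.Icc 0 ℓ,
        DifferentiableAt ℝ (fun y => w y v i) x) →
      IntegrableOn (fun q : ℝ × ℝ => ∑ i : Fin 2, (w q.1 q.2 i) ^ 2)
        ((Set.Ioo 0 ℓ) ×ˢ (Vset v₀ v₁)) →
      IntegrableOn (fun q : ℝ × ℝ => ∑ i : Fin 2, (deriv (fun y => w y q.2 i) q.1) ^ 2)
        ((Set.Ioo 0 ℓ) ×ˢ (Vset v₀ v₁)) →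
      IntegrableOn (fun q : ℝ × ℝ => ∑ i : Fin 2, (F q.1 q.2 i) ^ 2)
        ((Set.Ioo 0 ℓ) ×ˢ (Vset v₀ v₁)) →
      (∀ v ∈ Vset v₀ v₁, ∀ i : Fin 2, w 0 v i = 0) →
      (∀ x ∈ Set.Ioo 0 ℓ, ∀ v ∈ Vset v₀ v₁, ∀ i : Fin 2,
        deriv (fun y => w y v i) x + (A x v).mulVec (w x v) i
          + (∫ v' in Vset v₀ v₁, (D x v v').mulVec (w x v') i) = F x v i) →
      (∫ x in Set.Ioo 0 ℓ, ∫ v in Vset v₀ v₁,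
          ((∑ i : Fin 2, (deriv (fun y => w y v i) x) ^ 2)
            + s ^ 2 * ∑ i : Fin 2, (w x v i) ^ 2) *
            Real.exp (2 * s * ((Real.exp (lam * d x) - Real.exp (2 * lam * Md)) / δ ^ 2)))
        ≤ C * ∫ x in Set.Ioo 0 ℓ, ∫ v in Vset v₀ v₁,
            (∑ i : Fin 2, (F x v i) ^ 2) *
              Real.exp (2 * s * ((Real.exp (lam * d x) - Real.exp (2 * lam * Md)) / δ ^ 2)) := by
  obtain ⟨c, hc, hψ⟩ :=
    exists_deriv_carlemanWeight_le (Md := Md) hℓ (hd.of_le (by norm_num)) hd' hlam hδ.ne'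
  obtain ⟨MA, hMA⟩ := hA_bdd
  obtain ⟨MD, hMD⟩ := hD_bdd
  set K := 3 * (Fintype.card (Fin 2) : ℝ) ^ 2 * MA ^ 2 + 3 * (Fintype.card (Fin 2) : ℝ) ^ 2
    * MD ^ 2 * (volume.restrict (Vset v₀ v₁)).real univ * (volume.restrict (Vset v₀ v₁)).real univ
  refine ⟨(√(2 * K) + 1) / c, by positivity, 6 + 6 / c ^ 2, by positivity,
    fun s hs w F hwm hwd hW hG hF hw0 hode => ?_⟩
  have hsc : √(2 * K) + 1 ≤ s * c := (div_le_iff₀ hc).1 hs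
  exact carleman_estimate_system hℓ.le (measurableSet_Vset v₀ v₁) hc hψ hMA hMD
    (by nlinarith [Real.sqrt_nonneg (2 * K)])
    (by nlinarith [Real.sq_sqrt (by positivity : 0 ≤ 2 * K), Real.sqrt_nonneg (2 * K)])
    hwm hwd hW hG hF hw0 hode

/-- Proposition 5.1: Carleman estimate for a `2×2` first-order system in `x`
with an integral term, with weight `ψ(x) = (e^{λd(x)} − e^{2λ‖d‖})/δ²`;
`|·|` is the Euclidean norm on `ℝ²` (squared norms are written out as sums). -/
theorem system_carleman_first_order
    (ℓ v₀ v₁ : ℝ) (hℓ : 0 < ℓ) (hv₀ : 0 < v₀) (hv₀₁ : v₀ < v₁)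
    (d : ℝ → ℝ)
    (hd : ContDiffOn ℝ 2 d (Set.Icc 0 ℓ))
    (hd_pos : ∀ x ∈ Set.Ioo 0 ℓ, 0 < d x)
    (hd' : ∀ x ∈ Set.Icc 0 ℓ, deriv d x < 0)
    (Md : ℝ) (hMd : IsGreatest ((fun x => |d x|) '' Set.Icc 0 ℓ) Md)
    (lam δ : ℝ) (hlam : 0 < lam) (hδ : 0 < δ)
    (A : ℝ → ℝ → Matrix (Fin 2) (Fin 2) ℝ)
    (D : ℝ → ℝ → ℝ → Matrix (Fin 2) (Fin 2) ℝ)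
    (hA_meas : ∀ i j : Fin 2, Measurable fun q : ℝ × ℝ => A q.1 q.2 i j)
    (hD_meas : ∀ i j : Fin 2, Measurable fun q : ℝ × ℝ × ℝ => D q.1 q.2.1 q.2.2 i j)
    (hA_bdd : ∃ MA : ℝ, ∀ x ∈ Set.Ioo 0 ℓ, ∀ v ∈ Vset v₀ v₁, ∀ i j : Fin 2,
      |A x v i j| ≤ MA)
    (hD_bdd : ∃ MD : ℝ, ∀ x ∈ Set.Ioo 0 ℓ, ∀ v ∈ Vset v₀ v₁, ∀ v' ∈ Vset v₀ v₁,
      ∀ i j : Fin 2, |D x v v' i j| ≤ MD) :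
    ∃ s₁ > (0:ℝ), ∃ C > (0:ℝ), ∀ s ≥ s₁, ∀ w F : ℝ → ℝ → Fin 2 → ℝ,
      (∀ i : Fin 2, Measurable (fun q : ℝ × ℝ => w q.1 q.2 i)) →
      (∀ i : Fin 2, ∀ v ∈ Vset v₀ v₁, ∀ x ∈ Set.Icc 0 ℓ,
        DifferentiableAt ℝ (fun y => w y v i) x) →
      IntegrableOn (fun q : ℝ × ℝ => ∑ i : Fin 2, (w q.1 q.2 i) ^ 2)
        ((Set.Ioo 0 ℓ) ×ˢ (Vset v₀ v₁)) →
      IntegrableOn (fun q : ℝ × ℝ => ∑ i : Fin 2, (deriv (fun y => w y q.2 i) q.1) ^ 2)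
        ((Set.Ioo 0 ℓ) ×ˢ (Vset v₀ v₁)) →
      IntegrableOn (fun q : ℝ × ℝ => ∑ i : Fin 2, (F q.1 q.2 i) ^ 2)
        ((Set.Ioo 0 ℓ) ×ˢ (Vset v₀ v₁)) →
      (∀ v ∈ Vset v₀ v₁, ∀ i : Fin 2, w 0 v i = 0) →
      (∀ x ∈ Set.Ioo 0 ℓ, ∀ v ∈ Vset v₀ v₁, ∀ i : Fin 2,
        deriv (fun y => w y v i) x + (A x v).mulVec (w x v) i
          + (∫ v' in Vset v₀ v₁, (D x v v').mulVec (w x v') i) = F x v i) →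
      (∫ x in Set.Ioo 0 ℓ, ∫ v in Vset v₀ v₁,
          ((∑ i : Fin 2, (deriv (fun y => w y v i) x) ^ 2)
            + s ^ 2 * ∑ i : Fin 2, (w x v i) ^ 2) *
            Real.exp (2 * s * ((Real.exp (lam * d x) - Real.exp (2 * lam * Md)) / δ ^ 2)))
        ≤ C * ∫ x in Set.Ioo 0 ℓ, ∫ v in Vset v₀ v₁,
            (∑ i : Fin 2, (F x v i) ^ 2) *
              Real.exp (2 * s * ((Real.exp (lam * d x) - Real.exp (2 * lam * Md)) / δ ^ 2)) :=
  system_carleman_first_order_general ℓ v₀ v₁ hℓ d hd hd' Md lam δ hlam hδ A D hA_bdd hD_bdd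
end

section
/- Scalar Carleman estimate for a first-order equation in x with an integral term (Lemma A.1). Let λ > 0 and δ > 0 be fixed and set ψ(x) = (e^{λd(x)} − e^{2λ‖d‖})/δ². Let b : Ω×V → ℝ and c : Ω×V×V → ℝ be measurable and bounded. Then there exist s₁ > 0 and C > 0 such that for all s ≥ s₁ the following holds: for every w : [0,ℓ]×V → ℝ, measurable in v, differentiable in x with w and ∂ₓw square-integrable on Ω×V, satisfying w(0,v) = 0 for all v ∈ V and ∂ₓw(x,v) + b(x,v)w(x,v) + ∫_V c(x,v,v')w(x,v')dv' = F(x,v) on Ω×V with F square-integrable, one has ∫_Ω∫_V ( |∂ₓw(x,v)|² + s²|w(x,v)|² ) e^{2sψ(x)} dv dx ≤ C ∫_Ω∫_V |F(x,v)|² e^{2sψ(x)} dv dx. -/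
/-!
Put `E = exp (2 s ψ)`; on `[0, ℓ]` the derivative `ψ'` is bounded above by some `-ρ < 0`.
For each velocity `v`, integrate `(w² E)' = (2 w ∂ₓw + 2 s ψ' w²) E` over `[0, ℓ]`:
since `w(0, v) = 0` the result is nonnegative, and `2 w ∂ₓw ≤ sρ w² + (∂ₓw)² / (sρ)`
turns this into `s²ρ² ∫ w² E ≤ ∫ (∂ₓw)² E`. Conversely, the equation and Cauchy–Schwarz
in `v'` give `∫ (∂ₓw)² E ≤ 3 ∫ F² E + K ∫ w² E`, with `K` depending only on the bounds
of `b`, `c` and on `|V|`. Once `s²ρ² ≥ 2K` the `w`-term is absorbed, and the two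
inequalities bound the left-hand side by `(6 + 6 / ρ²) ∫ F² E`.
-/

open MeasureTheory Set Real

section

variable {α : Type*} [MeasurableSpace α] {ν : Measure α}

theorem sq_integral_le_measureReal_mul_integral_sq_s10 [IsFiniteMeasure ν] {f : α → ℝ}
    (hf : Integrable f ν) (hf2 : Integrable (fun v => f v ^ 2) ν) :
    (∫ v, f v ∂ν) ^ 2 ≤ ν.real univ * ∫ v, f v ^ 2 ∂ν := by
  rcases eq_zero_or_neZero ν with rfl | _
  · simp
  have hjensen := (even_two.convexOn_pow (𝕜 := ℝ)).map_average_le (continuousOn_pow 2)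
    isClosed_univ (by simp) hf hf2
  have hpos : 0 < ν.real univ := by simp [measureReal_def, ENNReal.toReal_pos_iff, NeZero.ne ν]
  simp only [average_eq, smul_eq_mul] at hjensen
  rw [mul_pow, inv_pow] at hjensen
  field_simp at hjensen
  nlinarith

theorem sq_integral_mul_le_of_abs_le [IsFiniteMeasure ν] {k u : α → ℝ} {M : ℝ}
    (hk : ∀ᵐ v ∂ν, |k v| ≤ M) (hu : AEStronglyMeasurable u ν)
    (hu2 : Integrable (fun v => u v ^ 2) ν) :
    (∫ v, k v * u v ∂ν) ^ 2 ≤ M ^ 2 * ν.real univ * ∫ v, u v ^ 2 ∂ν := by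
  have hu1 : Integrable u ν := ((memLp_two_iff_integrable_sq hu).2 hu2).integrable one_le_two
  have habs : |∫ v, k v * u v ∂ν| ≤ M * ∫ v, |u v| ∂ν := by
    rw [← integral_const_mul, ← Real.norm_eq_abs]
    refine norm_integral_le_of_norm_le (hu1.abs.const_mul M) ?_
    filter_upwards [hk] with v hv
    rw [Real.norm_eq_abs, abs_mul]
    exact mul_le_mul_of_nonneg_right hv (abs_nonneg _)
  have hcs := sq_integral_le_measureReal_mul_integral_sq_s10 hu1.abs
    (by simpa only [sq_abs] using hu2)
  simp only [sq_abs] at hcs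
  calc (∫ v, k v * u v ∂ν) ^ 2 = |∫ v, k v * u v ∂ν| ^ 2 := (sq_abs _).symm
    _ ≤ (M * ∫ v, |u v| ∂ν) ^ 2 := pow_le_pow_left₀ (abs_nonneg _) habs 2
    _ = M ^ 2 * (∫ v, |u v| ∂ν) ^ 2 := mul_pow _ _ _
    _ ≤ M ^ 2 * ν.real univ * ∫ v, u v ^ 2 ∂ν := by
      rw [mul_assoc]; exact mul_le_mul_of_nonneg_left hcs (sq_nonneg M)

theorem integral_sq_le_of_add_mul_add_integral_eq [IsFiniteMeasure ν] {g f β u : α → ℝ}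
    {k : α → α → ℝ} {Mb Mc : ℝ} (heq : ∀ᵐ v ∂ν, g v + β v * u v + ∫ v', k v v' * u v' ∂ν = f v)
    (hβ : ∀ᵐ v ∂ν, |β v| ≤ Mb) (hk : ∀ᵐ v ∂ν, ∀ᵐ v' ∂ν, |k v v'| ≤ Mc)
    (hu : AEStronglyMeasurable u ν) (hu2 : Integrable (fun v => u v ^ 2) ν)
    (hf2 : Integrable (fun v => f v ^ 2) ν) :
    ∫ v, g v ^ 2 ∂ν ≤
      3 * ∫ v, f v ^ 2 ∂ν + 3 * (Mb ^ 2 + Mc ^ 2 * ν.real univ ^ 2) * ∫ v, u v ^ 2 ∂ν := by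
  have hpointwise : ∀ᵐ v ∂ν, g v ^ 2 ≤ 3 * f v ^ 2 + 3 * Mb ^ 2 * u v ^ 2
      + 3 * (Mc ^ 2 * ν.real univ * ∫ v, u v ^ 2 ∂ν) := by
    filter_upwards [heq, hβ, hk] with v hv hβv hkv
    have hI := sq_integral_mul_le_of_abs_le hkv hu hu2
    have hβu : (β v * u v) ^ 2 ≤ Mb ^ 2 * u v ^ 2 := by
      rw [mul_pow, ← sq_abs (β v)]
      exact mul_le_mul_of_nonneg_right (pow_le_pow_left₀ (abs_nonneg _) hβv 2)
        (sq_nonneg _)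
    rw [eq_sub_of_add_eq (eq_sub_of_add_eq hv)]
    nlinarith [sq_nonneg (f v + β v * u v), sq_nonneg (f v + ∫ v', k v v' * u v' ∂ν),
      sq_nonneg (β v * u v - ∫ v', k v v' * u v' ∂ν)]
  have hfu : Integrable (fun v => 3 * f v ^ 2 + 3 * Mb ^ 2 * u v ^ 2) ν :=
    (hf2.const_mul 3).add (hu2.const_mul _)
  calc ∫ v, g v ^ 2 ∂ν
      ≤ ∫ v, (3 * f v ^ 2 + 3 * Mb ^ 2 * u v ^ 2
          + 3 * (Mc ^ 2 * ν.real univ * ∫ v, u v ^ 2 ∂ν)) ∂ν :=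
        integral_mono_of_nonneg (.of_forall fun _ => sq_nonneg _)
          (hfu.add (integrable_const _)) hpointwise
    _ = _ := by
      rw [integral_add hfu (integrable_const _),
        integral_add (hf2.const_mul 3) (hu2.const_mul _), integral_const_mul,
        integral_const_mul, integral_const, smul_eq_mul]
      ring

theorem sq_mul_integral_sq_mul_exp_le {l τ : ℝ} (hl : 0 ≤ l) (hτ : 0 < τ) {φ φ' u : ℝ → ℝ}
    (hφ : ∀ x ∈ Icc 0 l, HasDerivAt φ (φ' x) x) (hφ' : ∀ x ∈ Icc 0 l, φ' x ≤ -2 * τ)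
    (hu : ∀ x ∈ Icc 0 l, DifferentiableAt ℝ u x) (hu0 : u 0 = 0)
    (hu2 : IntegrableOn (fun x => u x ^ 2) (Ioo 0 l))
    (hu'2 : IntegrableOn (fun x => deriv u x ^ 2) (Ioo 0 l)) :
    τ ^ 2 * ∫ x in Ioo 0 l, u x ^ 2 * exp (φ x)
      ≤ ∫ x in Ioo 0 l, deriv u x ^ 2 * exp (φ x) := by
  have hE : ContinuousOn (fun x => exp (φ x)) (Icc 0 l) :=
    fun x hx => (hφ x hx).exp.continuousAt.continuousWithinAt
  have hX : IntegrableOn (fun x => u x ^ 2 * exp (φ x)) (Ioo 0 l) :=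
    hu2.mul_continuousOn_of_subset hE measurableSet_Ioo isCompact_Icc Ioo_subset_Icc_self
  have hY : IntegrableOn (fun x => deriv u x ^ 2 * exp (φ x)) (Ioo 0 l) :=
    hu'2.mul_continuousOn_of_subset hE measurableSet_Ioo isCompact_Icc Ioo_subset_Icc_self
  have hderiv : ∀ x ∈ Icc 0 l, HasDerivAt (fun x => u x ^ 2 * exp (φ x))
      ((2 * u x * deriv u x + φ' x * u x ^ 2) * exp (φ x)) x := by
    intro x hx
    have h := ((hu x hx).hasDerivAt.pow 2).mul (hφ x hx).exp
    exact h.congr_deriv (by simp only [Pi.pow_apply, Nat.cast_ofNat]; ring)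
  have hbound : ∀ x ∈ Ioo 0 l, (2 * u x * deriv u x + φ' x * u x ^ 2) * exp (φ x)
      ≤ deriv u x ^ 2 * exp (φ x) / τ - τ * (u x ^ 2 * exp (φ x)) := by
    intro x hx
    have hamgm : 2 * u x * deriv u x ≤ τ * u x ^ 2 + deriv u x ^ 2 / τ := by
      have hsq : τ * u x ^ 2 + deriv u x ^ 2 / τ - 2 * u x * deriv u x
          = (τ * u x - deriv u x) ^ 2 / τ := by
        field_simp
        ring
      rw [← sub_nonneg, hsq]
      positivity
    have hweight : φ' x * u x ^ 2 ≤ -2 * τ * u x ^ 2 :=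
      mul_le_mul_of_nonneg_right (hφ' x (Ioo_subset_Icc_self hx)) (sq_nonneg _)
    calc (2 * u x * deriv u x + φ' x * u x ^ 2) * exp (φ x)
        ≤ (deriv u x ^ 2 / τ - τ * u x ^ 2) * exp (φ x) :=
          mul_le_mul_of_nonneg_right (by linarith) (exp_pos _).le
      _ = _ := by ring
  have hbound_int : IntegrableOn
      (fun x => deriv u x ^ 2 * exp (φ x) / τ - τ * (u x ^ 2 * exp (φ x))) (Ioo 0 l) :=
    (hY.div_const τ).sub (hX.const_mul τ)
  have hFTC := intervalIntegral.sub_le_integral_of_hasDeriv_right_of_le hl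
    (fun x hx => (hderiv x hx).continuousAt.continuousWithinAt)
    (fun x hx => (hderiv x (Ioo_subset_Icc_self hx)).hasDerivWithinAt)
    ((integrableOn_Icc_iff_integrableOn_Ioo).2 hbound_int) hbound
  rw [intervalIntegral.integral_of_le hl, integral_Ioc_eq_integral_Ioo,
    integral_sub (hY.div_const τ) (hX.const_mul τ), integral_div, integral_const_mul,
    hu0, zero_pow two_ne_zero, zero_mul, sub_zero] at hFTC
  have hX_le : τ * ∫ x in Ioo 0 l, u x ^ 2 * exp (φ x)
      ≤ (∫ x in Ioo 0 l, deriv u x ^ 2 * exp (φ x)) / τ := by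
    have hend : 0 ≤ u l ^ 2 * exp (φ l) := by positivity
    linarith
  calc τ ^ 2 * ∫ x in Ioo 0 l, u x ^ 2 * exp (φ x)
      = τ * (τ * ∫ x in Ioo 0 l, u x ^ 2 * exp (φ x)) := by ring
    _ ≤ τ * ((∫ x in Ioo 0 l, deriv u x ^ 2 * exp (φ x)) / τ) :=
      mul_le_mul_of_nonneg_left hX_le hτ.le
    _ = _ := mul_div_cancel₀ _ hτ.ne'

theorem MeasureTheory.Integrable.mul_comp_fst_of_continuousOn {X : Type*} [TopologicalSpace X]
    [MeasurableSpace X] [OpensMeasurableSpace X] {μ : Measure X} {s K : Set X}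
    (hs : MeasurableSet s) (hK : IsCompact K) (hsK : s ⊆ K) {E : X → ℝ} (hE : ContinuousOn E K)
    {f : X × α → ℝ} (hf : Integrable f ((μ.restrict s).prod ν)) :
    Integrable (fun q => f q * E q.1) ((μ.restrict s).prod ν) := by
  obtain ⟨C, hC⟩ := hK.exists_bound_of_continuousOn hE
  refine hf.mul_bdd (c := C) (((hE.mono hsK).aestronglyMeasurable hs).comp_quasiMeasurePreserving
    Measure.quasiMeasurePreserving_fst) ?_
  exact Measure.quasiMeasurePreserving_fst.ae
    (ae_restrict_of_forall_mem hs fun x hx => hC x (hsK hx))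

theorem sq_mul_integral_prod_sq_mul_exp_le {l τ : ℝ} (hl : 0 ≤ l) (hτ : 0 < τ) {φ φ' : ℝ → ℝ}
    (hφ : ∀ x ∈ Icc 0 l, HasDerivAt φ (φ' x) x) (hφ' : ∀ x ∈ Icc 0 l, φ' x ≤ -2 * τ)
    [SFinite ν] {w : ℝ → α → ℝ}
    (hwd : ∀ᵐ v ∂ν, ∀ x ∈ Icc 0 l, DifferentiableAt ℝ (fun y => w y v) x)
    (hw0 : ∀ᵐ v ∂ν, w 0 v = 0)
    (hw2 : Integrable (fun q : ℝ × α => w q.1 q.2 ^ 2) ((volume.restrict (Ioo 0 l)).prod ν))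
    (hw'2 : Integrable (fun q : ℝ × α => deriv (fun y => w y q.2) q.1 ^ 2)
      ((volume.restrict (Ioo 0 l)).prod ν)) :
    τ ^ 2 * ∫ q, w q.1 q.2 ^ 2 * exp (φ q.1) ∂(volume.restrict (Ioo 0 l)).prod ν
      ≤ ∫ q, deriv (fun y => w y q.2) q.1 ^ 2 * exp (φ q.1)
          ∂(volume.restrict (Ioo 0 l)).prod ν := by
  have hE : ContinuousOn (fun x => exp (φ x)) (Icc 0 l) :=
    fun x hx => (hφ x hx).exp.continuousAt.continuousWithinAt
  have hw'E := hw'2.mul_comp_fst_of_continuousOn measurableSet_Ioo isCompact_Icc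
    Ioo_subset_Icc_self hE
  rw [integral_prod_symm _ (hw2.mul_comp_fst_of_continuousOn measurableSet_Ioo isCompact_Icc
    Ioo_subset_Icc_self hE), integral_prod_symm _ hw'E, ← integral_const_mul]
  refine integral_mono_of_nonneg (.of_forall fun v => ?_) hw'E.integral_prod_right ?_
  · exact mul_nonneg (sq_nonneg τ) (integral_nonneg fun x => by positivity)
  · filter_upwards [hwd, hw0, hw2.prod_left_ae, hw'2.prod_left_ae] with v hvd hv0 hv2 hv'2
    exact sq_mul_integral_sq_mul_exp_le hl hτ hφ hφ' hvd hv0 hv2 hv'2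

theorem integral_prod_deriv_sq_mul_le [IsFiniteMeasure ν] {l Mb Mc : ℝ} {E : ℝ → ℝ}
    (hE0 : ∀ x, 0 ≤ E x) (hE : ContinuousOn E (Icc 0 l))
    {b : ℝ → α → ℝ} {c : ℝ → α → α → ℝ} (hb : ∀ x ∈ Ioo 0 l, ∀ᵐ v ∂ν, |b x v| ≤ Mb)
    (hc : ∀ x ∈ Ioo 0 l, ∀ᵐ v ∂ν, ∀ᵐ v' ∂ν, |c x v v'| ≤ Mc)
    {w F : ℝ → α → ℝ} (hwm : ∀ x, AEStronglyMeasurable (w x) ν)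
    (hw2 : Integrable (fun q : ℝ × α => w q.1 q.2 ^ 2) ((volume.restrict (Ioo 0 l)).prod ν))
    (hw'2 : Integrable (fun q : ℝ × α => deriv (fun y => w y q.2) q.1 ^ 2)
      ((volume.restrict (Ioo 0 l)).prod ν))
    (hF2 : Integrable (fun q : ℝ × α => F q.1 q.2 ^ 2) ((volume.restrict (Ioo 0 l)).prod ν))
    (hPDE : ∀ x ∈ Ioo 0 l, ∀ᵐ v ∂ν,
      deriv (fun y => w y v) x + b x v * w x v + ∫ v', c x v v' * w x v' ∂ν = F x v) :
    ∫ q, deriv (fun y => w y q.2) q.1 ^ 2 * E q.1 ∂(volume.restrict (Ioo 0 l)).prod ν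
      ≤ 3 * ∫ q, F q.1 q.2 ^ 2 * E q.1 ∂(volume.restrict (Ioo 0 l)).prod ν
        + 3 * (Mb ^ 2 + Mc ^ 2 * ν.real univ ^ 2)
          * ∫ q, w q.1 q.2 ^ 2 * E q.1 ∂(volume.restrict (Ioo 0 l)).prod ν := by
  set K := 3 * (Mb ^ 2 + Mc ^ 2 * ν.real univ ^ 2)
  have hwE := hw2.mul_comp_fst_of_continuousOn measurableSet_Ioo isCompact_Icc
    Ioo_subset_Icc_self hE
  have hw'E := hw'2.mul_comp_fst_of_continuousOn measurableSet_Ioo isCompact_Icc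
    Ioo_subset_Icc_self hE
  have hFE := hF2.mul_comp_fst_of_continuousOn measurableSet_Ioo isCompact_Icc
    Ioo_subset_Icc_self hE
  rw [integral_prod _ hw'E, integral_prod _ hFE, integral_prod _ hwE, ← integral_const_mul,
    ← integral_const_mul, ← integral_add (hFE.integral_prod_left.const_mul 3)
      (hwE.integral_prod_left.const_mul K)]
  refine integral_mono_of_nonneg (.of_forall fun x => integral_nonneg fun v => ?_)
    ((hFE.integral_prod_left.const_mul 3).add (hwE.integral_prod_left.const_mul K)) ?_
  · exact mul_nonneg (sq_nonneg _) (hE0 x)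
  · filter_upwards [ae_restrict_mem measurableSet_Ioo, hw2.prod_right_ae, hF2.prod_right_ae]
      with x hx hwx hFx
    simp only [integral_mul_const]
    have h := integral_sq_le_of_add_mul_add_integral_eq (hPDE x hx) (hb x hx) (hc x hx)
      (hwm x) hwx hFx
    nlinarith [mul_le_mul_of_nonneg_right h (hE0 x)]

theorem carleman_estimate_of_deriv_le [IsFiniteMeasure ν] {l ρ s Mb Mc : ℝ} (hl : 0 ≤ l)
    (hρ : 0 < ρ) (hs : 0 < s) {ψ ψ' : ℝ → ℝ} (hψ : ∀ x ∈ Icc 0 l, HasDerivAt ψ (ψ' x) x)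
    (hψ' : ∀ x ∈ Icc 0 l, ψ' x ≤ -ρ)
    {b : ℝ → α → ℝ} {c : ℝ → α → α → ℝ} (hb : ∀ x ∈ Ioo 0 l, ∀ᵐ v ∂ν, |b x v| ≤ Mb)
    (hc : ∀ x ∈ Ioo 0 l, ∀ᵐ v ∂ν, ∀ᵐ v' ∂ν, |c x v v'| ≤ Mc)
    (hsρ : 6 * (Mb ^ 2 + Mc ^ 2 * ν.real univ ^ 2) ≤ (s * ρ) ^ 2)
    {w F : ℝ → α → ℝ} (hwm : ∀ x, AEStronglyMeasurable (w x) ν)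
    (hwd : ∀ᵐ v ∂ν, ∀ x ∈ Icc 0 l, DifferentiableAt ℝ (fun y => w y v) x)
    (hw0 : ∀ᵐ v ∂ν, w 0 v = 0)
    (hw2 : Integrable (fun q : ℝ × α => w q.1 q.2 ^ 2) ((volume.restrict (Ioo 0 l)).prod ν))
    (hw'2 : Integrable (fun q : ℝ × α => deriv (fun y => w y q.2) q.1 ^ 2)
      ((volume.restrict (Ioo 0 l)).prod ν))
    (hF2 : Integrable (fun q : ℝ × α => F q.1 q.2 ^ 2) ((volume.restrict (Ioo 0 l)).prod ν))
    (hPDE : ∀ x ∈ Ioo 0 l, ∀ᵐ v ∂ν,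
      deriv (fun y => w y v) x + b x v * w x v + ∫ v', c x v v' * w x v' ∂ν = F x v) :
    ∫ x in Ioo 0 l, ∫ v, (deriv (fun y => w y v) x ^ 2 + s ^ 2 * w x v ^ 2)
        * exp (2 * s * ψ x) ∂ν
      ≤ (6 + 6 / ρ ^ 2) * ∫ x in Ioo 0 l, ∫ v, F x v ^ 2 * exp (2 * s * ψ x) ∂ν := by
  have hφ : ∀ x ∈ Icc 0 l, HasDerivAt (fun x => 2 * s * ψ x) (2 * s * ψ' x) x :=
    fun x hx => (hψ x hx).const_mul _
  have hφ' : ∀ x ∈ Icc 0 l, 2 * s * ψ' x ≤ -2 * (s * ρ) := fun x hx => by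
    nlinarith [hψ' x hx]
  have hE : ContinuousOn (fun x => exp (2 * s * ψ x)) (Icc 0 l) :=
    fun x hx => (hφ x hx).exp.continuousAt.continuousWithinAt
  have hwE := hw2.mul_comp_fst_of_continuousOn measurableSet_Ioo isCompact_Icc
    Ioo_subset_Icc_self hE
  have hw'E := hw'2.mul_comp_fst_of_continuousOn measurableSet_Ioo isCompact_Icc
    Ioo_subset_Icc_self hE
  have hFE := hF2.mul_comp_fst_of_continuousOn measurableSet_Ioo isCompact_Icc
    Ioo_subset_Icc_self hE
  have hsumE := (hw'2.add (hw2.const_mul (s ^ 2))).mul_comp_fst_of_continuousOn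
    measurableSet_Ioo isCompact_Icc Ioo_subset_Icc_self hE
  have hstep1 := sq_mul_integral_prod_sq_mul_exp_le hl (mul_pos hs hρ) hφ hφ' hwd hw0 hw2 hw'2
  have hstep2 := integral_prod_deriv_sq_mul_le (fun _ => (exp_pos _).le) hE hb hc hwm
    hw2 hw'2 hF2 hPDE
  set μ := (volume.restrict (Ioo 0 l)).prod ν
  set A := ∫ q, w q.1 q.2 ^ 2 * exp (2 * s * ψ q.1) ∂μ
  set B := ∫ q, deriv (fun y => w y q.2) q.1 ^ 2 * exp (2 * s * ψ q.1) ∂μ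
  set Φ := ∫ q, F q.1 q.2 ^ 2 * exp (2 * s * ψ q.1) ∂μ
  have hA : 0 ≤ A := integral_nonneg fun q => by positivity
  have hB : B ≤ 6 * Φ := by linarith [mul_le_mul_of_nonneg_right hsρ hA]
  have hsA : s ^ 2 * A ≤ 6 * Φ / ρ ^ 2 := by
    rw [le_div_iff₀ (by positivity)]
    linarith
  calc ∫ x in Ioo 0 l, ∫ v, (deriv (fun y => w y v) x ^ 2 + s ^ 2 * w x v ^ 2)
        * exp (2 * s * ψ x) ∂ν
      = B + s ^ 2 * A := by
        rw [integral_integral hsumE, ← integral_const_mul,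
          ← integral_add hw'E (hwE.const_mul _)]
        exact integral_congr_ae (.of_forall fun q => by ring)
    _ ≤ 6 * Φ + 6 * Φ / ρ ^ 2 := by linarith
    _ = _ := by
      rw [integral_integral (f := fun x v => F x v ^ 2 * exp (2 * s * ψ x)) hFE]
      ring

end

theorem exists_hasDerivAt_carleman_weight_le_neg {ℓ lam δ M : ℝ} {d : ℝ → ℝ} (hℓ : 0 < ℓ)
    (hd : ContDiffOn ℝ 1 d (Icc 0 ℓ)) (hd' : ∀ x ∈ Icc 0 ℓ, deriv d x < 0) (hlam : 0 < lam)
    (hδ : δ ≠ 0) :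
    ∃ ψ' : ℝ → ℝ, ∃ ρ > 0, ∀ x ∈ Icc 0 ℓ,
      HasDerivAt (fun y => (exp (lam * d y) - M) / δ ^ 2) (ψ' x) x ∧ ψ' x ≤ -ρ := by
  have hdiff : ∀ x ∈ Icc 0 ℓ, DifferentiableAt ℝ d x :=
    fun x hx => differentiableAt_of_deriv_ne_zero (hd' x hx).ne
  have hd'c : ContinuousOn (deriv d) (Icc 0 ℓ) :=
    (hd.continuousOn_derivWithin (uniqueDiffOn_Icc hℓ) le_rfl).congr fun x hx =>
      ((hdiff x hx).derivWithin (uniqueDiffOn_Icc hℓ x hx)).symm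
  set ψ' : ℝ → ℝ := fun x => exp (lam * d x) * (lam * deriv d x) / δ ^ 2
  have hψ'c : ContinuousOn ψ' (Icc 0 ℓ) :=
    ((continuous_exp.comp_continuousOn (hd.continuousOn.const_smul lam)).mul
      (hd'c.const_smul lam)).div_const _
  have hψ'neg : ∀ x ∈ Icc 0 ℓ, 0 < -ψ' x := fun x hx => neg_pos.2 <|
    div_neg_of_neg_of_pos (mul_neg_of_pos_of_neg (exp_pos _) (mul_neg_of_pos_of_neg hlam
      (hd' x hx))) (by positivity)
  obtain ⟨ρ, hρ, hψ'ρ⟩ := isCompact_Icc.exists_forall_le' hψ'c.neg hψ'neg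
  refine ⟨ψ', ρ, hρ, fun x hx => ⟨?_, le_neg_of_le_neg (hψ'ρ x hx)⟩⟩
  exact (((hdiff x hx).hasDerivAt.const_mul lam).exp.sub_const _).div_const _

theorem scalar_carleman_first_order_general
    (ℓ v₀ v₁ : ℝ) (hℓ : 0 < ℓ)
    (d : ℝ → ℝ)
    (hd : ContDiffOn ℝ 2 d (Set.Icc 0 ℓ))
    (hd' : ∀ x ∈ Set.Icc 0 ℓ, deriv d x < 0)
    (Md : ℝ)
    (lam δ : ℝ) (hlam : 0 < lam) (hδ : 0 < δ)
    (b : ℝ → ℝ → ℝ) (c : ℝ → ℝ → ℝ → ℝ)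
    (hb_bdd : ∃ Mb : ℝ, ∀ x ∈ Set.Ioo 0 ℓ, ∀ v ∈ Vset v₀ v₁, |b x v| ≤ Mb)
    (hc_bdd : ∃ Mc : ℝ, ∀ x ∈ Set.Ioo 0 ℓ, ∀ v ∈ Vset v₀ v₁, ∀ v' ∈ Vset v₀ v₁,
      |c x v v'| ≤ Mc) :
    ∃ s₁ > (0:ℝ), ∃ C > (0:ℝ), ∀ s ≥ s₁, ∀ w F : ℝ → ℝ → ℝ,
      Measurable (fun q : ℝ × ℝ => w q.1 q.2) →
      (∀ v ∈ Vset v₀ v₁, ∀ x ∈ Set.Icc 0 ℓ, DifferentiableAt ℝ (fun y => w y v) x) →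
      IntegrableOn (fun q : ℝ × ℝ => (w q.1 q.2) ^ 2)
        ((Set.Ioo 0 ℓ) ×ˢ (Vset v₀ v₁)) →
      IntegrableOn (fun q : ℝ × ℝ => (deriv (fun y => w y q.2) q.1) ^ 2)
        ((Set.Ioo 0 ℓ) ×ˢ (Vset v₀ v₁)) →
      IntegrableOn (fun q : ℝ × ℝ => (F q.1 q.2) ^ 2)
        ((Set.Ioo 0 ℓ) ×ˢ (Vset v₀ v₁)) →
      (∀ v ∈ Vset v₀ v₁, w 0 v = 0) →
      (∀ x ∈ Set.Ioo 0 ℓ, ∀ v ∈ Vset v₀ v₁,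
        deriv (fun y => w y v) x + b x v * w x v
          + (∫ v' in Vset v₀ v₁, c x v v' * w x v') = F x v) →
      (∫ x in Set.Ioo 0 ℓ, ∫ v in Vset v₀ v₁,
          ((deriv (fun y => w y v) x) ^ 2 + s ^ 2 * (w x v) ^ 2) *
            Real.exp (2 * s * ((Real.exp (lam * d x) - Real.exp (2 * lam * Md)) / δ ^ 2)))
        ≤ C * ∫ x in Set.Ioo 0 ℓ, ∫ v in Vset v₀ v₁,
            (F x v) ^ 2 *
              Real.exp (2 * s * ((Real.exp (lam * d x) - Real.exp (2 * lam * Md)) / δ ^ 2)) := by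
  obtain ⟨Mb, hMb⟩ := hb_bdd
  obtain ⟨Mc, hMc⟩ := hc_bdd
  obtain ⟨ψ', ρ, hρ, hψ⟩ := exists_hasDerivAt_carleman_weight_le_neg (M := exp (2 * lam * Md))
    hℓ (hd.of_le (by norm_num)) hd' hlam hδ.ne'
  have hV : MeasurableSet (Vset v₀ v₁) := measurableSet_Icc.union measurableSet_Icc
  have : IsFiniteMeasure (volume.restrict (Vset v₀ v₁)) :=
    isFiniteMeasure_restrict.2 (isCompact_Icc.union isCompact_Icc).measure_lt_top.ne
  have hprod : volume.restrict (Ioo 0 ℓ ×ˢ Vset v₀ v₁)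
      = (volume.restrict (Ioo 0 ℓ)).prod (volume.restrict (Vset v₀ v₁)) := by
    rw [Measure.volume_eq_prod, Measure.prod_restrict]
  set K := 6 * (Mb ^ 2 + Mc ^ 2 * (volume.restrict (Vset v₀ v₁)).real univ ^ 2)
  refine ⟨(√K + 1) / ρ, by positivity, 6 + 6 / ρ ^ 2, by positivity,
    fun s hs w F hwm hwd hw2 hw'2 hF2 hw0 hPDE => ?_⟩
  have hsρ : √K + 1 ≤ s * ρ := (div_le_iff₀ hρ).1 hs
  rw [IntegrableOn, hprod] at hw2 hw'2 hF2
  exact carleman_estimate_of_deriv_le hℓ.le hρ (lt_of_lt_of_le (by positivity) hs)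
    (fun x hx => (hψ x hx).1) (fun x hx => (hψ x hx).2)
    (fun x hx => ae_restrict_of_forall_mem hV (hMb x hx))
    (fun x hx => ae_restrict_of_forall_mem hV fun v hv =>
      ae_restrict_of_forall_mem hV (hMc x hx v hv))
    (Real.sqrt_le_iff.1 (by linarith)).2
    (fun x => (hwm.comp measurable_prodMk_left).aestronglyMeasurable)
    (ae_restrict_of_forall_mem hV hwd) (ae_restrict_of_forall_mem hV hw0) hw2 hw'2 hF2
    (fun x hx => ae_restrict_of_forall_mem hV (hPDE x hx))

/-- Lemma A.1: scalar Carleman estimate for a first-order equation in `x`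
with an integral term, with weight `ψ(x) = (e^{λd(x)} − e^{2λ‖d‖})/δ²`. -/
theorem scalar_carleman_first_order
    (ℓ v₀ v₁ : ℝ) (hℓ : 0 < ℓ) (hv₀ : 0 < v₀) (hv₀₁ : v₀ < v₁)
    (d : ℝ → ℝ)
    (hd : ContDiffOn ℝ 2 d (Set.Icc 0 ℓ))
    (hd_pos : ∀ x ∈ Set.Ioo 0 ℓ, 0 < d x)
    (hd' : ∀ x ∈ Set.Icc 0 ℓ, deriv d x < 0)
    (Md : ℝ) (hMd : IsGreatest ((fun x => |d x|) '' Set.Icc 0 ℓ) Md)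
    (lam δ : ℝ) (hlam : 0 < lam) (hδ : 0 < δ)
    (b : ℝ → ℝ → ℝ) (c : ℝ → ℝ → ℝ → ℝ)
    (hb_meas : Measurable fun q : ℝ × ℝ => b q.1 q.2)
    (hc_meas : Measurable fun q : ℝ × ℝ × ℝ => c q.1 q.2.1 q.2.2)
    (hb_bdd : ∃ Mb : ℝ, ∀ x ∈ Set.Ioo 0 ℓ, ∀ v ∈ Vset v₀ v₁, |b x v| ≤ Mb)
    (hc_bdd : ∃ Mc : ℝ, ∀ x ∈ Set.Ioo 0 ℓ, ∀ v ∈ Vset v₀ v₁, ∀ v' ∈ Vset v₀ v₁,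
      |c x v v'| ≤ Mc) :
    ∃ s₁ > (0:ℝ), ∃ C > (0:ℝ), ∀ s ≥ s₁, ∀ w F : ℝ → ℝ → ℝ,
      Measurable (fun q : ℝ × ℝ => w q.1 q.2) →
      (∀ v ∈ Vset v₀ v₁, ∀ x ∈ Set.Icc 0 ℓ, DifferentiableAt ℝ (fun y => w y v) x) →
      IntegrableOn (fun q : ℝ × ℝ => (w q.1 q.2) ^ 2)
        ((Set.Ioo 0 ℓ) ×ˢ (Vset v₀ v₁)) →
      IntegrableOn (fun q : ℝ × ℝ => (deriv (fun y => w y q.2) q.1) ^ 2)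
        ((Set.Ioo 0 ℓ) ×ˢ (Vset v₀ v₁)) →
      IntegrableOn (fun q : ℝ × ℝ => (F q.1 q.2) ^ 2)
        ((Set.Ioo 0 ℓ) ×ˢ (Vset v₀ v₁)) →
      (∀ v ∈ Vset v₀ v₁, w 0 v = 0) →
      (∀ x ∈ Set.Ioo 0 ℓ, ∀ v ∈ Vset v₀ v₁,
        deriv (fun y => w y v) x + b x v * w x v
          + (∫ v' in Vset v₀ v₁, c x v v' * w x v') = F x v) →
      (∫ x in Set.Ioo 0 ℓ, ∫ v in Vset v₀ v₁,
          ((deriv (fun y => w y v) x) ^ 2 + s ^ 2 * (w x v) ^ 2) *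
            Real.exp (2 * s * ((Real.exp (lam * d x) - Real.exp (2 * lam * Md)) / δ ^ 2)))
        ≤ C * ∫ x in Set.Ioo 0 ℓ, ∫ v in Vset v₀ v₁,
            (F x v) ^ 2 *
              Real.exp (2 * s * ((Real.exp (lam * d x) - Real.exp (2 * lam * Md)) / δ ^ 2)) :=
  scalar_carleman_first_order_general ℓ v₀ v₁ hℓ d hd hd' Md lam δ hlam hδ b c hb_bdd hc_bdd
end
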